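/- arXiv:2211.02719 — 2 statements merged into one kernel-verified Lean document; each statement's English description precedes it below -/
import Mathlib

section
/- Suppose t̃_k ∈ Ω for all k ∈ {1,…,m}. Then for every real 1 ≤ p < ∞, the Dirichlet interpolation error satisfies ‖f̃ − Sf‖_p ≤ 2 m^{1/p} Σ_{|ℓ|>Ñ} |c_ℓ|, where ‖·‖_p denotes the entrywise p-norm on ℂ^m. -/
open scoped BigOperators
open MeasureTheory Matrix

noncomputable section

/-- The complex exponential `e(x) = exp(2πix)`. -/
def ce (x : ℝ) : ℂ := Complex.exp (2 * Real.pi * Complex.I * x)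

/-- Half-bandwidth `Ñ = (N-1)/2`. -/
def Nt (N : ℕ) : ℤ := ((N : ℤ) - 1) / 2

/-- Uniform grid point `t_p = (p-1)/N - 1/2` (zero-based index). -/
def tg (N : ℕ) (p : Fin N) : ℝ := (p : ℝ) / N - 1 / 2

/-- Dirichlet interpolation matrix `S ∈ ℂ^{m×N}`. -/
def dirS (N m : ℕ) (tt : Fin m → ℝ) : Matrix (Fin m) (Fin N) ℂ :=
  fun k p => (N : ℂ)⁻¹ * ∑ u ∈ Finset.Icc (-(Nt N)) (Nt N), ce (u * (tg N p - tt k))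

/-- Centered DFT matrix `F ∈ ℂ^{N×N}`. -/
def dftF (N : ℕ) : Matrix (Fin N) (Fin N) ℂ :=
  fun p u => ((Real.sqrt N : ℂ))⁻¹ * ce (-(tg N p) * ((u : ℤ) - Nt N))

/-- DFT-incoherence parameter of `Ψ`. -/
def dftIncoh (N n : ℕ) (Ψ : Matrix (Fin N) (Fin n) ℂ) : ℝ :=
  ⨆ ℓ : Fin n, ∑ k : Fin N, ‖((dftF N)ᴴ * Ψ) k ℓ‖

/-- Euclidean norm on `ℂ^n`. -/
def norm2 {n : ℕ} (v : Fin n → ℂ) : ℝ := Real.sqrt (∑ i, ‖v i‖ ^ 2)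

/-- `ℓ₁` norm on `ℂ^n`. -/
def norm1 {n : ℕ} (v : Fin n → ℂ) : ℝ := ∑ i, ‖v i‖

/-- `v` has at most `s` nonzero entries. -/
def Sparse {n : ℕ} (s : ℕ) (v : Fin n → ℂ) : Prop :=
  (Finset.univ.filter fun i => v i ≠ 0).card ≤ s

/-- Error of the best `s`-sparse approximation of `g` in `ℓ₁`. -/
def sperr {n : ℕ} (s : ℕ) (g : Fin n → ℂ) : ℝ :=
  sInf {r : ℝ | ∃ h : Fin n → ℂ, Sparse s h ∧ r = norm1 (fun i => h i - g i)}

/-- The 1-periodic signal with Fourier coefficients `c`. -/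
def fcont (c : ℤ → ℂ) (x : ℝ) : ℂ := ∑' ℓ : ℤ, c ℓ * ce (ℓ * x)

/-- Tail `∑_{|ℓ|>Ñ} |c_ℓ|` of the Fourier coefficients. -/
def tailSum (N : ℕ) (c : ℤ → ℂ) : ℝ :=
  ∑' ℓ : ℤ, if Nt N < |ℓ| then ‖c ℓ‖ else 0

/-- The distribution `𝒟` satisfies the deviation model with parameter `θ`. -/
def DevModel (N m : ℕ) (𝒟 : Measure ℝ) (θ : ℝ) : Prop :=
  ∀ j : ℤ, j ≠ 0 → (|j| : ℝ) ≤ 2 * ((N : ℝ) - 1) / m →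
    (2 * N / m) * ‖∫ x, ce (((j * m : ℤ) : ℝ) * x) ∂𝒟‖ ≤ θ

/-- The random nonuniform sample points `t̃_k = (k-1)/m - 1/2 + Δ_k`. -/
def samplePts {Ω : Type*} (m : ℕ) (Δ : Fin m → Ω → ℝ) (ω : Ω) : Fin m → ℝ :=
  fun k => (k : ℝ) / m - 1 / 2 + Δ k ω

end

/-!
On the grid `t_q` the character `e(ℓ·)` coincides with `e(ℓ'·)` times the unimodular constant
`e(-(ℓ - ℓ')/2)`, where `ℓ' = (ℓ : ZMod N).valMinAbs` is the residue of `ℓ` modulo `N` in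
`[-Ñ, Ñ]`, and by discrete orthogonality the Dirichlet interpolant reproduces `e(ℓ'·)` exactly.
So `S` maps the samples of `e(ℓ·)` to a vector of unimodular entries, which is
`(e(ℓ t̃_k))_k` itself when `|ℓ| ≤ Ñ`. Expanding `𝐟` in its Fourier series, every entry of
`f̃ - Sf` has modulus at most `2 Σ_{|ℓ|>Ñ} |c_ℓ|`, wherever the sample points lie, and the
`p`-norm bound follows.
-/

open Finset

lemma ce_add (x y : ℝ) : ce (x + y) = ce x * ce y := by
  rw [ce, ce, ce, ← Complex.exp_add]; push_cast; ring_nf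

lemma norm_ce (x : ℝ) : ‖ce x‖ = 1 := by
  simp [ce, Complex.norm_exp]

lemma ce_intCast (n : ℤ) : ce n = 1 := by
  rw [ce, Complex.exp_eq_one_iff]; exact ⟨n, by push_cast; ring⟩

lemma ce_eq_one_iff (x : ℝ) : ce x = 1 ↔ ∃ n : ℤ, x = n := by
  have h2πI : 2 * Real.pi * Complex.I ≠ 0 := by simp [Real.pi_ne_zero]
  rw [ce, Complex.exp_eq_one_iff]
  refine exists_congr fun n => ⟨fun h => ?_, fun h => by rw [h]; push_cast; ring⟩
  exact_mod_cast mul_left_cancel₀ h2πI (h.trans (mul_comm _ _))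

lemma ce_pow (x : ℝ) (n : ℕ) : ce x ^ n = ce (n * x) := by
  rw [ce, ce, ← Complex.exp_nat_mul]; push_cast; ring_nf

lemma sum_ce_mul_div {N : ℕ} (hN : 0 < N) (a : ℤ) :
    ∑ q : Fin N, ce (a * q / N) = if (N : ℤ) ∣ a then (N : ℂ) else 0 := by
  have hN' : (N : ℝ) ≠ 0 := by positivity
  have hpow : ∀ q : ℕ, ce (a * q / N) = ce (a / N) ^ q := fun q => by rw [ce_pow]; ring_nf
  simp only [hpow]
  rw [Fin.sum_univ_eq_sum_range (fun q => ce (a / N) ^ q)]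
  split_ifs with hdvd
  · obtain ⟨b, rfl⟩ := hdvd
    have hb : ((N * b : ℤ) : ℝ) / N = b := by push_cast; field_simp
    simp only [hb, ce_intCast, one_pow, sum_const, card_range, nsmul_eq_mul, mul_one]
  · have hne : ce (a / N) ≠ 1 := by
      rw [Ne, ce_eq_one_iff]
      rintro ⟨n, hn⟩
      exact hdvd ⟨n, by exact_mod_cast (div_eq_iff hN').1 hn |>.trans (mul_comm _ _)⟩
    have hroot : ce (a / N) ^ N = 1 := by
      rw [ce_pow, mul_div_cancel₀ _ hN', ce_intCast]
    rw [geom_sum_eq hne, hroot, sub_self, zero_div]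

lemma sum_ce_mul_tg {N : ℕ} (hN : 0 < N) (a : ℤ) :
    ∑ q : Fin N, ce (a * tg N q) = if (N : ℤ) ∣ a then N * ce (-a / 2) else 0 := by
  have hsplit : ∀ q : Fin N, ce (a * tg N q) = ce (-a / 2) * ce (a * q / N) := fun q => by
    rw [← ce_add, tg]; ring_nf
  rw [sum_congr rfl fun q _ => hsplit q, ← mul_sum, sum_ce_mul_div hN]
  split_ifs <;> ring

lemma natCast_eq_two_mul_Nt_add_one {N : ℕ} (hN : Odd N) : (N : ℤ) = 2 * Nt N + 1 := by
  obtain ⟨k, rfl⟩ := hN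
  simp only [Nt]; push_cast; omega

lemma valMinAbs_intCast_eq_iff {N : ℕ} (hN : Odd N) (ℓ v : ℤ) :
    (ℓ : ZMod N).valMinAbs = v ↔ (N : ℤ) ∣ ℓ - v ∧ v ∈ Icc (-Nt N) (Nt N) := by
  have : NeZero N := ⟨hN.pos.ne'⟩
  have hN2 := natCast_eq_two_mul_Nt_add_one hN
  rw [ZMod.valMinAbs_spec, ZMod.intCast_eq_intCast_iff_dvd_sub, dvd_sub_comm, Set.mem_Ioc,
    mem_Icc]
  exact and_congr_right' ⟨fun h => by omega, fun h => by omega⟩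

lemma summable_mul_ce {c : ℤ → ℂ} (hc : Summable fun ℓ : ℤ => ‖c ℓ‖) (x : ℝ) :
    Summable fun ℓ : ℤ => c ℓ * ce (ℓ * x) :=
  Summable.of_norm (by simpa [norm_ce] using hc)

section DirichletInterpolation

variable {N m : ℕ} (tt : Fin m → ℝ) (k : Fin m)

lemma dirS_mulVec_ce (hN : Odd N) (ℓ : ℤ) :
    (dirS N m tt).mulVec (fun q => ce (ℓ * tg N q)) k =
      ce ((ℓ : ZMod N).valMinAbs * tt k) * ce (-((ℓ - (ℓ : ZMod N).valMinAbs : ℤ) : ℝ) / 2) := by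
  set v := (ℓ : ZMod N).valMinAbs
  have hN0 : (N : ℂ) ≠ 0 := by exact_mod_cast hN.pos.ne'
  have hv := (valMinAbs_intCast_eq_iff hN ℓ v).1 rfl
  have hsplit : ∀ (u : ℤ) (q : Fin N), ce (u * (tg N q - tt k)) * ce (ℓ * tg N q) =
      ce (-u * tt k) * ce ((u + ℓ : ℤ) * tg N q) := fun u q => by
    rw [← ce_add, ← ce_add]; push_cast; ring_nf
  calc (dirS N m tt).mulVec (fun q => ce (ℓ * tg N q)) k
      = (N : ℂ)⁻¹ * ∑ u ∈ Icc (-Nt N) (Nt N),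
          ce (-u * tt k) * ∑ q : Fin N, ce ((u + ℓ : ℤ) * tg N q) := by
        simp only [Matrix.mulVec, dotProduct, dirS, mul_sum, sum_mul]
        rw [sum_comm]
        exact sum_congr rfl fun u _ => sum_congr rfl fun q _ => by rw [← hsplit]; ring
    _ = (N : ℂ)⁻¹ * (ce (-(-v : ℤ) * tt k) * (N * ce (-((-v + ℓ : ℤ) : ℝ) / 2))) := by
        simp only [sum_ce_mul_tg hN.pos]
        rw [sum_eq_single_of_mem (-v) (by simpa [and_comm, neg_le] using hv.2), if_pos]
        · simpa [add_comm, ← sub_eq_add_neg] using hv.1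
        · intro u hu hne
          rw [if_neg, mul_zero]
          refine fun hdvd => hne ?_
          have := (valMinAbs_intCast_eq_iff hN ℓ (-u)).2
            ⟨by simpa [sub_neg_eq_add, add_comm] using hdvd, by simp only [mem_Icc] at hu ⊢; omega⟩
          omega
    _ = _ := by
        field_simp
        push_cast; ring_nf

lemma dirS_mulVec_ce_of_abs_le (hN : Odd N) {ℓ : ℤ} (hℓ : |ℓ| ≤ Nt N) :
    (dirS N m tt).mulVec (fun q => ce (ℓ * tg N q)) k = ce (ℓ * tt k) := by
  have hv : (ℓ : ZMod N).valMinAbs = ℓ :=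
    (valMinAbs_intCast_eq_iff hN ℓ ℓ).2 ⟨by simp, mem_Icc.2 (abs_le.1 hℓ)⟩
  rw [dirS_mulVec_ce tt k hN, hv, sub_self]
  simp [ce]

lemma norm_dirS_mulVec_ce (hN : Odd N) (ℓ : ℤ) :
    ‖(dirS N m tt).mulVec (fun q => ce (ℓ * tg N q)) k‖ = 1 := by
  rw [dirS_mulVec_ce tt k hN, norm_mul, norm_ce, norm_ce, mul_one]

lemma dirS_mulVec_fcont {c : ℤ → ℂ} (hc : Summable fun ℓ : ℤ => ‖c ℓ‖) :
    (dirS N m tt).mulVec (fun q => fcont c (tg N q)) k =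
      ∑' ℓ : ℤ, c ℓ * (dirS N m tt).mulVec (fun q => ce (ℓ * tg N q)) k := by
  simp only [Matrix.mulVec, dotProduct, fcont, mul_sum, ← tsum_mul_left]
  rw [← Summable.tsum_finsetSum fun q _ => (summable_mul_ce hc _).mul_left _]
  refine tsum_congr fun ℓ => sum_congr rfl fun q _ => ?_
  ring

lemma norm_fcont_sub_dirS_mulVec_le (hN : Odd N) {c : ℤ → ℂ}
    (hc : Summable fun ℓ : ℤ => ‖c ℓ‖) :
    ‖fcont c (tt k) - (dirS N m tt).mulVec (fun q => fcont c (tg N q)) k‖ ≤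
      2 * tailSum N c := by
  set tail : ℤ → ℝ := fun ℓ => if Nt N < |ℓ| then ‖c ℓ‖ else 0
  have htail : Summable tail :=
    hc.of_nonneg_of_le (fun ℓ => by positivity) fun ℓ => by simp only [tail]; split_ifs <;> simp
  rw [dirS_mulVec_fcont tt k hc, fcont,
    ← (summable_mul_ce hc _).tsum_sub (Summable.of_norm_bounded hc fun ℓ => by
      rw [norm_mul, norm_dirS_mulVec_ce tt k hN, mul_one])]
  refine tsum_of_norm_bounded (htail.hasSum.mul_left 2) fun ℓ => ?_
  rw [← mul_sub, norm_mul]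
  by_cases hℓ : Nt N < |ℓ|
  · calc ‖c ℓ‖ * ‖ce (ℓ * tt k) - (dirS N m tt).mulVec (fun q => ce (ℓ * tg N q)) k‖
        ≤ ‖c ℓ‖ * 2 := by
          gcongr
          exact (norm_sub_le _ _).trans (by rw [norm_ce, norm_dirS_mulVec_ce tt k hN]; norm_num)
      _ = 2 * tail ℓ := by simp only [tail, if_pos hℓ]; ring
  · rw [dirS_mulVec_ce_of_abs_le tt k hN (not_lt.1 hℓ)]
    simp [tail, hℓ]

end DirichletInterpolation

lemma sum_norm_rpow_rpow_one_div_le {ι E : Type*} [Fintype ι] [SeminormedAddGroup E]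
    {v : ι → E} {B p : ℝ} (hB : 0 ≤ B) (hv : ∀ i, ‖v i‖ ≤ B) (hp : 0 < p) :
    (∑ i, ‖v i‖ ^ p) ^ (1 / p) ≤ (Fintype.card ι : ℝ) ^ (1 / p) * B := by
  calc (∑ i, ‖v i‖ ^ p) ^ (1 / p)
      ≤ (∑ _i : ι, B ^ p) ^ (1 / p) := by gcongr with i; exact hv i
    _ = (Fintype.card ι : ℝ) ^ (1 / p) * B := by
        rw [sum_const, card_univ, nsmul_eq_mul, Real.mul_rpow (by positivity) (by positivity),
          ← Real.rpow_mul hB, mul_one_div_cancel hp.ne', Real.rpow_one]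

theorem dirichlet_interp_error_pnorm_general
    (N m : ℕ) (hN : Odd N)
    (c : ℤ → ℂ) (hc : Summable fun ℓ : ℤ => ‖c ℓ‖)
    (tt : Fin m → ℝ)
    (p : ℝ) (hp : 1 ≤ p) :
    (∑ k : Fin m, ‖
        fcont c (tt k) - (dirS N m tt).mulVec (fun q => fcont c (tg N q)) k‖ ^ p)
      ^ (1 / p) ≤ 2 * (m : ℝ) ^ (1 / p) * tailSum N c := by
  have htail : 0 ≤ tailSum N c := tsum_nonneg fun ℓ => by positivity
  calc _ ≤ (Fintype.card (Fin m) : ℝ) ^ (1 / p) * (2 * tailSum N c) :=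
        sum_norm_rpow_rpow_one_div_le (by positivity)
          (norm_fcont_sub_dirS_mulVec_le tt · hN hc) (by linarith)
    _ = 2 * (m : ℝ) ^ (1 / p) * tailSum N c := by rw [Fintype.card_fin]; ring

/-- entrywise `p`-norm bound `‖f̃ - Sf‖_p ≤ 2 m^{1/p} ∑_{|ℓ|>Ñ}|c_ℓ|`
for every real `1 ≤ p < ∞`, when all sample points lie in `Ω = [-1/2, 1/2)`. -/
theorem dirichlet_interp_error_pnorm
    (N m : ℕ) (hN : Odd N) (hNpos : 0 < N) (hm : 0 < m)
    (c : ℤ → ℂ) (hc : Summable fun ℓ : ℤ => ‖c ℓ‖)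
    (tt : Fin m → ℝ)
    (hΩ : ∀ k : Fin m, tt k ∈ Set.Ico (-(1/2) : ℝ) (1/2))
    (p : ℝ) (hp : 1 ≤ p) :
    (∑ k : Fin m, ‖
        fcont c (tt k) - (dirS N m tt).mulVec (fun q => fcont c (tg N q)) k‖ ^ p)
      ^ (1 / p) ≤ 2 * (m : ℝ) ^ (1 / p) * tailSum N c :=
  dirichlet_interp_error_pnorm_general N m hN c hc tt p hp
end

section
/- Let Ψ ∈ ℂ^{N×n} satisfy α‖w‖₂ ≤ ‖Ψw‖₂ ≤ β‖w‖₂ for all w ∈ ℂ^n (0 < α ≤ β), let the deviation model hold with parameter θ ≥ 0, and set A = (√N/√m) S Ψ ∈ ℂ^{m×n}. Then for every w ∈ ℂ^n, α²(1 − θ)‖w‖₂² ≤ E‖Aw‖₂² ≤ β²(1 + θ)‖w‖₂², where the expectation is over the random deviations Δ₁,…,Δ_m. -/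
open scoped BigOperators
open MeasureTheory Matrix

/-!
Write `g = Ψ w` and `ĝ` for its centred DFT (`dftCoeff`), so that row `k` of `S g` is the
trigonometric polynomial `∑ᵤ ĝ(u) e(-u t̃ₖ)`. Averaging its squared modulus over `Δₖ` and then
summing over the uniform grid `(k-1)/m - 1/2` kills every frequency difference `v - u` not divisible
by `m`, so `E‖A w‖² = N ∑ᵤ,ᵥ ĝ(u) conj ĝ(v) K(v - u)` with `K(0) = 1` and, by the deviation model,
`|K(d)| ≤ θm/(2N)` for the other `|d| ≤ N - 1`. By Parseval the diagonal is `‖g‖²`; every frequency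
has at most `2N/m` partners off the diagonal, so AM–GM bounds that part by `θ‖g‖²`. Finally
`α‖w‖ ≤ ‖g‖ ≤ β‖w‖`.
-/

open Finset

lemma ce_zero : ce 0 = 1 := by simp [ce]

lemma conj_ce (x : ℝ) : (starRingEnd ℂ) (ce x) = ce (-x) := by
  rw [ce, ce, ← Complex.exp_conj]
  congr 1
  simp only [map_mul, Complex.conj_I, Complex.conj_ofReal, map_ofNat]
  push_cast
  ring

lemma ce_natCast_mul (k : ℕ) (x : ℝ) : ce (k * x) = ce x ^ k := by
  induction k with
  | zero => simp [ce_zero]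
  | succ k ih => rw [pow_succ, ← ih, ← ce_add]; push_cast; ring_nf

lemma continuous_ce : Continuous ce := by unfold ce; fun_prop

lemma integrable_ce_mul (𝒟 : Measure ℝ) [IsFiniteMeasure 𝒟] (a : ℝ) :
    Integrable (fun x => ce (a * x)) 𝒟 :=
  (integrable_const (1 : ℝ)).mono'
    ((continuous_ce.comp (continuous_const.mul continuous_id)).aestronglyMeasurable)
    (.of_forall fun x => by simp [norm_ce])

lemma sum_range_ce_mul_div {M : ℕ} (hM : 0 < M) (j : ℤ) :
    ∑ k ∈ range M, ce (j * k / M) = if (M : ℤ) ∣ j then (M : ℂ) else 0 := by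
  have hM' : (M : ℝ) ≠ 0 := by positivity
  have hpow : ∀ k : ℕ, ce (j * k / M) = ce (j / M) ^ k := fun k => by
    rw [← ce_natCast_mul]; ring_nf
  simp only [hpow]
  split_ifs with hdvd
  · obtain ⟨c, rfl⟩ := hdvd
    have : ce (((M * c : ℤ) : ℝ) / M) = 1 := by
      push_cast
      rw [mul_div_cancel_left₀ _ hM', ce_intCast]
    simp only [this, one_pow, sum_const, card_range, nsmul_eq_mul, mul_one]
  · have hne : ce (j / M) ≠ 1 := by
      rw [Ne, ce_eq_one_iff]
      rintro ⟨n, hn⟩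
      refine hdvd ⟨n, ?_⟩
      rw [div_eq_iff hM'] at hn
      exact_mod_cast (by linarith : (j : ℝ) = M * n)
    have hroot : ce (j / M) ^ M = 1 := by
      rw [← ce_natCast_mul, mul_div_cancel₀ _ hM', ce_intCast]
    rw [geom_sum_eq hne, hroot, sub_self, zero_div]

lemma two_mul_Nt {N : ℕ} (hN : Odd N) : 2 * Nt N = N - 1 := by
  obtain ⟨t, rfl⟩ := hN
  simp only [Nt]
  omega

lemma sum_Icc_Nt_ce {N : ℕ} (hN : Odd N) (j : ℤ) :
    ∑ u ∈ Icc (-Nt N) (Nt N), ce (u * (j / N)) =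
      ce (-Nt N * j / N) * if (N : ℤ) ∣ j then (N : ℂ) else 0 := by
  have hcard : (Nt N + 1 - -Nt N).toNat = N := by have := two_mul_Nt hN; omega
  rw [Int.Icc_eq_finset_map, sum_map, hcard, ← sum_range_ce_mul_div hN.pos, mul_sum]
  refine sum_congr rfl fun k _ => ?_
  rw [← ce_add]
  simp only [Function.Embedding.trans_apply, Nat.castEmbedding_apply, addLeftEmbedding_apply]
  push_cast
  ring_nf

lemma sum_Icc_Nt_ce_of_natAbs_lt {N : ℕ} (hN : Odd N) {j : ℤ} (hj : j.natAbs < N) :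
    ∑ u ∈ Icc (-Nt N) (Nt N), ce (u * (j / N)) = if j = 0 then (N : ℂ) else 0 := by
  rw [sum_Icc_Nt_ce hN]
  by_cases hj0 : j = 0
  · simp [hj0, ce_zero]
  · have hndvd : ¬ (N : ℤ) ∣ j := fun hdvd =>
      hj0 (Int.eq_zero_of_dvd_of_natAbs_lt_natAbs hdvd (by simpa using hj))
    simp [hj0, hndvd]

lemma sum_ce_grid {m : ℕ} (hm : 0 < m) (j : ℤ) :
    ∑ k : Fin m, ce (j * ((k : ℝ) / m - 1 / 2)) =
      ce (-j / 2) * if (m : ℤ) ∣ j then (m : ℂ) else 0 := by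
  rw [Fin.sum_univ_eq_sum_range (fun k : ℕ => ce (j * ((k : ℝ) / m - 1 / 2))) m,
    ← sum_range_ce_mul_div hm, mul_sum]
  refine sum_congr rfl fun k _ => ?_
  rw [← ce_add]
  ring_nf

lemma ofReal_normSq_sum {ι : Type*} (s : Finset ι) (x : ι → ℂ) :
    (Complex.normSq (∑ i ∈ s, x i) : ℂ) = ∑ i ∈ s, ∑ j ∈ s, x i * starRingEnd ℂ (x j) := by
  rw [← Complex.mul_conj, map_sum, sum_mul_sum]

noncomputable def dftCoeff (N : ℕ) (g : Fin N → ℂ) (u : ℤ) : ℂ :=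
  (N : ℂ)⁻¹ * ∑ p, g p * ce (u * tg N p)

lemma dirS_mulVec_apply (N m : ℕ) (t : Fin m → ℝ) (g : Fin N → ℂ) (k : Fin m) :
    (dirS N m t *ᵥ g) k = ∑ u ∈ Icc (-Nt N) (Nt N), dftCoeff N g u * ce (-(u * t k)) := by
  simp only [mulVec, dotProduct, dirS, dftCoeff, sum_mul, mul_sum, ← mul_assoc]
  rw [sum_comm]
  refine sum_congr rfl fun u _ => sum_congr rfl fun p _ => ?_
  rw [mul_sub, sub_eq_add_neg, ce_add]
  ring

lemma dftCoeff_parseval {N : ℕ} (hN : Odd N) (g : Fin N → ℂ) :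
    N * ∑ u ∈ Icc (-Nt N) (Nt N), Complex.normSq (dftCoeff N g u) = ∑ p, Complex.normSq (g p) := by
  have hN0 : (N : ℂ) ≠ 0 := Nat.cast_ne_zero.mpr hN.pos.ne'
  have horth : ∀ p q : Fin N, ∑ u ∈ Icc (-Nt N) (Nt N), ce (u * tg N p) * ce (-(u * tg N q)) =
      if p = q then (N : ℂ) else 0 := fun p q => by
    have hpq : ((p : ℤ) - q).natAbs < N := by omega
    have hiff : ((p - q : ℤ) = 0) ↔ p = q := by rw [sub_eq_zero, Int.natCast_inj, Fin.val_inj]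
    rw [← if_congr hiff rfl rfl, ← sum_Icc_Nt_ce_of_natAbs_lt hN hpq]
    refine sum_congr rfl fun u _ => ?_
    rw [← ce_add]
    simp only [tg]
    push_cast
    ring_nf
  have hexpand : ∀ u : ℤ, (Complex.normSq (dftCoeff N g u) : ℂ) = (N : ℂ)⁻¹ ^ 2 *
      ∑ p, ∑ q, g p * starRingEnd ℂ (g q) * (ce (u * tg N p) * ce (-(u * tg N q))) := fun u => by
    rw [← Complex.mul_conj, dftCoeff, map_mul, map_sum, map_inv₀, Complex.conj_natCast,
      mul_mul_mul_comm, sum_mul_sum, ← sq]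
    simp_rw [map_mul, conj_ce]
    congr 1
    refine sum_congr rfl fun p _ => sum_congr rfl fun q _ => by ring
  apply Complex.ofReal_injective
  push_cast
  simp_rw [hexpand, ← mul_sum]
  rw [sum_comm]
  simp_rw [sum_comm (s := Icc _ _), ← mul_sum, horth, mul_ite, mul_zero, sum_ite_eq,
    mem_univ, if_true, Complex.mul_conj]
  rw [← sum_mul]
  field_simp

lemma normSq_sum_ce_eq_re (U : Finset ℤ) (c : ℤ → ℂ) (b δ : ℝ) :
    Complex.normSq (∑ u ∈ U, c u * ce (-(u * (b + δ)))) =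
      (∑ u ∈ U, ∑ v ∈ U, c u * starRingEnd ℂ (c v) * ce ((v - u : ℤ) * b) *
        ce ((v - u : ℤ) * δ)).re := by
  rw [← Complex.ofReal_re (Complex.normSq _), ofReal_normSq_sum]
  congr 1
  refine sum_congr rfl fun u _ => sum_congr rfl fun v _ => ?_
  have hce : ce (-(u * (b + δ))) * ce (-(-(v * (b + δ)))) =
      ce ((v - u : ℤ) * b) * ce ((v - u : ℤ) * δ) := by
    rw [← ce_add, ← ce_add]; push_cast; ring_nf
  rw [map_mul, conj_ce]
  linear_combination (c u * starRingEnd ℂ (c v)) * hce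

section TrigonometricSum

variable (𝒟 : Measure ℝ) [IsFiniteMeasure 𝒟] (U : Finset ℤ) (c : ℤ → ℂ) (b : ℝ)

lemma integrable_sum_sum_ce :
    Integrable (fun δ => ∑ u ∈ U, ∑ v ∈ U, c u * starRingEnd ℂ (c v) * ce ((v - u : ℤ) * b) *
      ce ((v - u : ℤ) * δ)) 𝒟 :=
  integrable_finsetSum _ fun _ _ => integrable_finsetSum _ fun _ _ =>
    (integrable_ce_mul 𝒟 _).const_mul _

lemma integrable_normSq_sum_ce :
    Integrable (fun δ => Complex.normSq (∑ u ∈ U, c u * ce (-(u * (b + δ))))) 𝒟 := by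
  simp_rw [normSq_sum_ce_eq_re]
  exact (integrable_sum_sum_ce 𝒟 U c b).re

lemma integral_normSq_sum_ce :
    ∫ δ, Complex.normSq (∑ u ∈ U, c u * ce (-(u * (b + δ)))) ∂𝒟 =
      (∑ u ∈ U, ∑ v ∈ U, c u * starRingEnd ℂ (c v) * ce ((v - u : ℤ) * b) *
        ∫ x, ce ((v - u : ℤ) * x) ∂𝒟).re := by
  simp_rw [normSq_sum_ce_eq_re]
  have hre := integral_re (integrable_sum_sum_ce 𝒟 U c b)
  simp only [RCLike.re_to_complex] at hre
  rw [hre]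
  congr 1
  rw [integral_finsetSum _ fun _ _ => integrable_finsetSum _ fun _ _ =>
    (integrable_ce_mul 𝒟 _).const_mul _]
  refine sum_congr rfl fun u _ => ?_
  rw [integral_finsetSum _ fun _ _ => (integrable_ce_mul 𝒟 _).const_mul _]
  exact sum_congr rfl fun v _ => integral_const_mul _ _

end TrigonometricSum

lemma integral_sum_comp_eq_of_map_eq {Ω α ι : Type*} [MeasurableSpace Ω] [MeasurableSpace α]
    [Fintype ι] {μ : Measure Ω} {ν : Measure α} {X : ι → Ω → α} (hX : ∀ k, Measurable (X k))
    (hmap : ∀ k, μ.map (X k) = ν) {f : ι → α → ℝ} (hf : ∀ k, Integrable (f k) ν) :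
    ∫ ω, ∑ k, f k (X k ω) ∂μ = ∑ k, ∫ x, f k x ∂ν := by
  have hf' : ∀ k, Integrable (f k) (μ.map (X k)) := fun k => hmap k ▸ hf k
  rw [integral_finsetSum (f := fun k ω => f k (X k ω)) _ fun k _ =>
    (hf' k).comp_measurable (hX k)]
  refine sum_congr rfl fun k _ => ?_
  rw [← integral_map (hX k).aemeasurable (hf' k).aestronglyMeasurable, hmap k]

lemma norm_integral_ce_le_of_devModel {N m : ℕ} (hm : 0 < m) {𝒟 : Measure ℝ} {θ : ℝ}
    (hdev : DevModel N m 𝒟 θ) {d : ℤ} (hd0 : d ≠ 0) (hdvd : (m : ℤ) ∣ d)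
    (hdN : |d| ≤ N - 1) : ‖∫ x, ce (d * x) ∂𝒟‖ ≤ θ * m / (2 * N) := by
  obtain ⟨j, rfl⟩ := hdvd
  have hN : (0 : ℝ) < N := by
    have : (1 : ℤ) ≤ |m * j| := Int.one_le_abs hd0
    exact_mod_cast (by omega : (0 : ℤ) < N)
  have hmR : (0 : ℝ) < m := by exact_mod_cast hm
  have hj : (|j| : ℝ) ≤ 2 * ((N : ℝ) - 1) / m := by
    rw [le_div_iff₀ hmR]
    have : |j| * m ≤ (N : ℤ) - 1 := by rwa [abs_mul, Nat.abs_cast, mul_comm] at hdN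
    have : (|j| : ℝ) * m ≤ N - 1 := by exact_mod_cast this
    nlinarith [abs_nonneg (j : ℝ)]
  have h := hdev j (by rintro rfl; simp at hd0) hj
  rw [mul_comm (j : ℤ)] at h
  rw [le_div_iff₀ (by positivity)]
  calc _ = 2 * N / m * ‖∫ x, ce ((m * j : ℤ) * x) ∂𝒟‖ * m := by field_simp
    _ ≤ θ * m := by gcongr

lemma card_filter_ne_dvd_sub_mul_le {m : ℕ} (hm : 0 < m) {a b u : ℤ} (hu : u ∈ Icc a b) :
    (#{v ∈ Icc a b | v ≠ u ∧ (m : ℤ) ∣ v - u} : ℤ) * m ≤ 2 * (b - a) := by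
  rw [mem_Icc] at hu
  set K := (b - a) / m
  have hKm : K * m ≤ b - a := Int.ediv_mul_le _ (by omega)
  have hsub : {v ∈ Icc a b | v ≠ u ∧ (m : ℤ) ∣ v - u} ⊆
      ((Icc (-K) K).erase 0).image fun j => u + m * j := by
    intro v hv
    simp only [mem_filter, mem_Icc] at hv
    obtain ⟨⟨hav, hvb⟩, hvu, j, hj⟩ := hv
    refine mem_image.mpr ⟨j, mem_erase.mpr ⟨?_, mem_Icc.mpr ⟨?_, ?_⟩⟩, by linarith⟩
    · rintro rfl; omega
    · have : -j ≤ K := by rw [Int.le_ediv_iff_mul_le (by omega)]; nlinarith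
      omega
    · rw [Int.le_ediv_iff_mul_le (by omega)]; nlinarith
  have hcard : (#((Icc (-K) K).erase 0) : ℤ) = 2 * K := by
    have : (0 : ℤ) ≤ K := Int.ediv_nonneg (by omega) (by omega)
    rw [card_erase_of_mem (by simp; omega), Int.card_Icc]
    omega
  have hle : (#{v ∈ Icc a b | v ≠ u ∧ (m : ℤ) ∣ v - u} : ℤ) ≤ 2 * K := by
    rw [← hcard]
    exact_mod_cast (card_le_card hsub).trans card_image_le
  nlinarith

lemma norm_sum_sum_mul_conj_le {ι : Type*} (s : Finset ι) (R : ι → ι → Prop) [DecidableRel R]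
    (hR : ∀ u v, R u v → R v u) (c : ι → ℂ) (K : ι → ι → ℂ) {κ r : ℝ} (hκ : 0 ≤ κ)
    (hK : ∀ u ∈ s, ∀ v ∈ s, ‖K u v‖ ≤ if R u v then κ else 0)
    (hcard : ∀ u ∈ s, (#{v ∈ s | R u v} : ℝ) ≤ r) :
    ‖∑ u ∈ s, ∑ v ∈ s, c u * starRingEnd ℂ (c v) * K u v‖ ≤ κ * r * ∑ u ∈ s, ‖c u‖ ^ 2 := by
  set a := fun u => ‖c u‖
  have hsymm : ∑ u ∈ s, ∑ v ∈ s, (if R u v then a v ^ 2 else 0) =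
      ∑ u ∈ s, ∑ v ∈ s, (if R u v then a u ^ 2 else 0) := by
    rw [sum_comm]
    exact sum_congr rfl fun u _ => sum_congr rfl fun v _ =>
      if_congr ⟨hR v u, hR u v⟩ rfl rfl
  calc ‖∑ u ∈ s, ∑ v ∈ s, c u * starRingEnd ℂ (c v) * K u v‖
      ≤ ∑ u ∈ s, ∑ v ∈ s, a u * a v * (if R u v then κ else 0) := by
        refine (norm_sum_le _ _).trans <| sum_le_sum fun u hu => (norm_sum_le _ _).trans <|
          sum_le_sum fun v hv => ?_
        rw [norm_mul, norm_mul, Complex.norm_conj]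
        exact mul_le_mul_of_nonneg_left (hK u hu v hv) (by positivity)
    _ ≤ ∑ u ∈ s, ∑ v ∈ s, κ / 2 * ((if R u v then a u ^ 2 else 0) +
          (if R u v then a v ^ 2 else 0)) := by
        refine sum_le_sum fun u _ => sum_le_sum fun v _ => ?_
        split_ifs
        · nlinarith [sq_nonneg (a u - a v)]
        · simp
    _ = κ * ∑ u ∈ s, (#{v ∈ s | R u v} : ℝ) * a u ^ 2 := by
        simp_rw [← mul_sum, sum_add_distrib, hsymm, ← sum_filter, sum_const, nsmul_eq_mul]
        ring
    _ ≤ κ * ∑ u ∈ s, r * a u ^ 2 := by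
        gcongr with u hu
        exact hcard u hu
    _ = κ * r * ∑ u ∈ s, ‖c u‖ ^ 2 := by rw [← mul_sum, mul_assoc]

lemma norm2_sq {n : ℕ} (v : Fin n → ℂ) : norm2 v ^ 2 = ∑ i, Complex.normSq (v i) := by
  rw [norm2, Real.sq_sqrt (by positivity)]
  exact sum_congr rfl fun i _ => Complex.sq_norm (v i)

lemma norm2_sq_sqrt_div_sqrt_smul_dirS_mul_mulVec {N m n : ℕ} (t : Fin m → ℝ)
    (Ψ : Matrix (Fin N) (Fin n) ℂ) (w : Fin n → ℂ) :
    norm2 ((((Real.sqrt N : ℂ) / (Real.sqrt m : ℂ)) • (dirS N m t * Ψ)) *ᵥ w) ^ 2 =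
      N / m * ∑ k, Complex.normSq
        (∑ u ∈ Icc (-Nt N) (Nt N), dftCoeff N (Ψ *ᵥ w) u * ce (-(u * t k))) := by
  have hscalar : Complex.normSq ((Real.sqrt N : ℂ) / (Real.sqrt m : ℂ)) = N / m := by
    rw [Complex.normSq_div, Complex.normSq_ofReal, Complex.normSq_ofReal,
      Real.mul_self_sqrt (Nat.cast_nonneg _), Real.mul_self_sqrt (Nat.cast_nonneg _)]
  simp_rw [norm2_sq, smul_mulVec, ← mulVec_mulVec, Pi.smul_apply, smul_eq_mul,
    Complex.normSq_mul, hscalar, dirS_mulVec_apply, ← mul_sum]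

/-- `(1/m) ∑ₖ e(d ((k-1)/m - 1/2)) · E e(dδ)`, the weight of the frequency difference `d`. -/
noncomputable def devKernel (m : ℕ) (𝒟 : Measure ℝ) (d : ℤ) : ℂ :=
  if (m : ℤ) ∣ d then ce (-d / 2) * ∫ x, ce (d * x) ∂𝒟 else 0

lemma integral_norm2_sq_eq {N m n : ℕ} (hm : 0 < m) (Ψ : Matrix (Fin N) (Fin n) ℂ)
    (w : Fin n → ℂ) {Ω : Type*} [MeasurableSpace Ω] {μ : Measure Ω} {Δ : Fin m → Ω → ℝ}
    (hmeas : ∀ k, Measurable (Δ k)) {𝒟 : Measure ℝ} [IsFiniteMeasure 𝒟]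
    (hdist : ∀ k, μ.map (Δ k) = 𝒟) :
    ∫ ω, norm2 ((((Real.sqrt N : ℂ) / (Real.sqrt m : ℂ)) •
        (dirS N m (samplePts m Δ ω) * Ψ)) *ᵥ w) ^ 2 ∂μ =
      N * (∑ u ∈ Icc (-Nt N) (Nt N), ∑ v ∈ Icc (-Nt N) (Nt N),
        dftCoeff N (Ψ *ᵥ w) u * starRingEnd ℂ (dftCoeff N (Ψ *ᵥ w) v) *
          devKernel m 𝒟 (v - u)).re := by
  set U := Icc (-Nt N) (Nt N)
  set c := dftCoeff N (Ψ *ᵥ w)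
  simp_rw [norm2_sq_sqrt_div_sqrt_smul_dirS_mul_mulVec, samplePts]
  rw [integral_const_mul, integral_sum_comp_eq_of_map_eq hmeas hdist
    fun k => integrable_normSq_sum_ce 𝒟 U c _]
  have hgrid : ∀ u v, ∑ k : Fin m, c u * starRingEnd ℂ (c v) *
      ce ((v - u : ℤ) * ((k : ℝ) / m - 1 / 2)) * ∫ x, ce ((v - u : ℤ) * x) ∂𝒟 =
      m * (c u * starRingEnd ℂ (c v) * devKernel m 𝒟 (v - u)) := fun u v => by
    rw [← sum_mul, ← mul_sum, sum_ce_grid hm, devKernel]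
    push_cast
    split_ifs <;> ring
  simp_rw [integral_normSq_sum_ce, ← Complex.re_sum]
  rw [sum_comm]
  simp only [sum_comm (s := (univ : Finset (Fin m))) (t := U), hgrid, ← mul_sum]
  rw [← Complex.ofReal_natCast, Complex.re_ofReal_mul]
  field_simp

lemma devKernel_zero (m : ℕ) (𝒟 : Measure ℝ) [IsProbabilityMeasure 𝒟] : devKernel m 𝒟 0 = 1 := by
  simp [devKernel, ce_zero]

lemma norm_devKernel_le {N m : ℕ} (hm : 0 < m) {𝒟 : Measure ℝ} {θ : ℝ}
    (hdev : DevModel N m 𝒟 θ) {d : ℤ} (hd0 : d ≠ 0) (hdN : |d| ≤ N - 1) :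
    ‖devKernel m 𝒟 d‖ ≤ if (m : ℤ) ∣ d then θ * m / (2 * N) else 0 := by
  unfold devKernel
  split_ifs with hdvd
  · rw [norm_mul, norm_ce, one_mul]
    exact norm_integral_ce_le_of_devModel hm hdev hd0 hdvd hdN
  · simp

lemma sum_sum_mul_conj_eq_add_offDiag {ι : Type*} [DecidableEq ι] (s : Finset ι) (c : ι → ℂ)
    (K : ι → ι → ℂ) (hK : ∀ u, K u u = 1) :
    ∑ u ∈ s, ∑ v ∈ s, c u * starRingEnd ℂ (c v) * K u v =
      (∑ u ∈ s, Complex.normSq (c u) : ℝ) +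
        ∑ u ∈ s, ∑ v ∈ s, c u * starRingEnd ℂ (c v) * if u = v then 0 else K u v := by
  have hdiag : ∀ u ∈ s, ∑ v ∈ s, c u * starRingEnd ℂ (c v) * K u v =
      Complex.normSq (c u) + ∑ v ∈ s, c u * starRingEnd ℂ (c v) * if u = v then 0 else K u v :=
    fun u hu => by
      have hself : c u * starRingEnd ℂ (c u) =
          ∑ v ∈ s, if u = v then c u * starRingEnd ℂ (c v) * K u v else 0 := by
        rw [sum_ite_eq, if_pos hu, hK, mul_one]
      rw [← Complex.mul_conj, hself, ← sum_add_distrib]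
      exact sum_congr rfl fun v _ => by split_ifs <;> simp
  rw [sum_congr rfl hdiag, sum_add_distrib]
  push_cast
  rfl

lemma abs_re_sum_devKernel_sub_le {N m : ℕ} (hN : Odd N) (hm : 0 < m) {𝒟 : Measure ℝ}
    [IsProbabilityMeasure 𝒟] {θ : ℝ} (hθ : 0 ≤ θ) (hdev : DevModel N m 𝒟 θ) (c : ℤ → ℂ) :
    |(∑ u ∈ Icc (-Nt N) (Nt N), ∑ v ∈ Icc (-Nt N) (Nt N),
        c u * starRingEnd ℂ (c v) * devKernel m 𝒟 (v - u)).re -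
      ∑ u ∈ Icc (-Nt N) (Nt N), Complex.normSq (c u)| ≤
      θ * ∑ u ∈ Icc (-Nt N) (Nt N), Complex.normSq (c u) := by
  set U := Icc (-Nt N) (Nt N)
  set R : ℤ → ℤ → Prop := fun u v => v ≠ u ∧ (m : ℤ) ∣ v - u
  have hNt := two_mul_Nt hN
  have hNR : (0 : ℝ) < N := by exact_mod_cast hN.pos
  have hmR : (0 : ℝ) < m := by exact_mod_cast hm
  have hK : ∀ u ∈ U, ∀ v ∈ U, ‖if u = v then 0 else devKernel m 𝒟 (v - u)‖ ≤
      if R u v then θ * m / (2 * N) else 0 := fun u hu v hv => by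
    simp only [mem_Icc, U] at hu hv
    rcases eq_or_ne u v with rfl | huv
    · simp only [if_true, norm_zero]
      split_ifs <;> positivity
    · simpa [R, huv, huv.symm] using norm_devKernel_le hm hdev (sub_ne_zero.mpr huv.symm)
        (by rw [abs_le]; omega)
  have hcard : ∀ u ∈ U, (#{v ∈ U | R u v} : ℝ) ≤ 2 * N / m := fun u hu => by
    rw [le_div_iff₀ hmR]
    have := card_filter_ne_dvd_sub_mul_le hm hu
    exact_mod_cast
      (by omega : (#{v ∈ Icc (-Nt N) (Nt N) | v ≠ u ∧ (m : ℤ) ∣ v - u} : ℤ) * m ≤ 2 * N)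
  have hoff := norm_sum_sum_mul_conj_le U R (fun u v h => ⟨h.1.symm, dvd_sub_comm.mp h.2⟩) c _
    (by positivity) hK hcard
  rw [sum_sum_mul_conj_eq_add_offDiag U c _ fun u => by simp [devKernel_zero], Complex.add_re,
    Complex.ofReal_re, add_sub_cancel_left]
  refine (Complex.abs_re_le_norm _).trans (hoff.trans_eq ?_)
  simp_rw [Complex.sq_norm]
  field_simp

lemma bounds_of_abs_sub_le_mul {E P A B θ : ℝ} (hE : 0 ≤ E) (hθ : 0 ≤ θ) (hA : 0 ≤ A)
    (hAP : A ≤ P) (hPB : P ≤ B) (hEP : |E - P| ≤ θ * P) :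
    A * (1 - θ) ≤ E ∧ E ≤ B * (1 + θ) := by
  rw [abs_le] at hEP
  refine ⟨?_, by nlinarith⟩
  rcases le_total θ 1 with hθ1 | hθ1
  · nlinarith
  · nlinarith

theorem expectation_frame_bounds_general
    (N n m : ℕ) (hN : Odd N) (hm : 0 < m)
    (Ψ : Matrix (Fin N) (Fin n) ℂ) (α β : ℝ) (hα : 0 < α)
    (hΨ : ∀ w : Fin n → ℂ, α * norm2 w ≤ norm2 (Ψ.mulVec w) ∧
      norm2 (Ψ.mulVec w) ≤ β * norm2 w)
    (Ωs : Type) (mΩ : MeasurableSpace Ωs) (μ : Measure Ωs)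
    (Δ : Fin m → Ωs → ℝ) (hmeas : ∀ k, Measurable (Δ k))
    (𝒟 : Measure ℝ) (h𝒟 : IsProbabilityMeasure 𝒟)
    (hdist : ∀ k, Measure.map (Δ k) μ = 𝒟)
    (θ : ℝ) (hθ : 0 ≤ θ) (hdev : DevModel N m 𝒟 θ)
    (w : Fin n → ℂ) :
    α ^ 2 * (1 - θ) * norm2 w ^ 2 ≤
      (∫ ω, norm2 ((((Real.sqrt N : ℂ) / (Real.sqrt m : ℂ)) •
        (dirS N m (samplePts m Δ ω) * Ψ)).mulVec w) ^ 2 ∂μ) ∧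
    (∫ ω, norm2 ((((Real.sqrt N : ℂ) / (Real.sqrt m : ℂ)) •
        (dirS N m (samplePts m Δ ω) * Ψ)).mulVec w) ^ 2 ∂μ) ≤
      β ^ 2 * (1 + θ) * norm2 w ^ 2 := by
  have hNR : (0 : ℝ) < N := by exact_mod_cast hN.pos
  have hParseval := dftCoeff_parseval hN (Ψ *ᵥ w)
  have hquad := abs_re_sum_devKernel_sub_le hN hm hθ hdev (dftCoeff N (Ψ *ᵥ w))
  have hEP : |(∫ ω, norm2 ((((Real.sqrt N : ℂ) / (Real.sqrt m : ℂ)) •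
      (dirS N m (samplePts m Δ ω) * Ψ)) *ᵥ w) ^ 2 ∂μ) - norm2 (Ψ *ᵥ w) ^ 2| ≤
      θ * norm2 (Ψ *ᵥ w) ^ 2 := by
    rw [integral_norm2_sq_eq hm Ψ w hmeas hdist, norm2_sq, ← hParseval, ← mul_sub, abs_mul,
      abs_of_pos hNR, mul_left_comm]
    exact mul_le_mul_of_nonneg_left hquad hNR.le
  have hlower : (α * norm2 w) ^ 2 ≤ norm2 (Ψ *ᵥ w) ^ 2 :=
    pow_le_pow_left₀ (mul_nonneg hα.le (Real.sqrt_nonneg _)) (hΨ w).1 2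
  have hupper : norm2 (Ψ *ᵥ w) ^ 2 ≤ (β * norm2 w) ^ 2 :=
    pow_le_pow_left₀ (Real.sqrt_nonneg _) (hΨ w).2 2
  simp_rw [mul_right_comm _ _ (norm2 w ^ 2), ← mul_pow]
  exact bounds_of_abs_sub_le_mul (integral_nonneg fun _ => sq_nonneg _) hθ (sq_nonneg _)
    hlower hupper hEP

/-- expectation bounds `α²(1-θ)‖w‖₂² ≤ E‖Aw‖₂² ≤ β²(1+θ)‖w‖₂²` for
`A = (√N/√m) S Ψ` under the deviation model with parameter `θ`. -/
theorem expectation_frame_bounds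
    (N n m : ℕ) (hN : Odd N) (hNpos : 0 < N) (hm : 0 < m) (hn : 0 < n)
    (Ψ : Matrix (Fin N) (Fin n) ℂ) (α β : ℝ) (hα : 0 < α) (hαβ : α ≤ β)
    (hΨ : ∀ w : Fin n → ℂ, α * norm2 w ≤ norm2 (Ψ.mulVec w) ∧
      norm2 (Ψ.mulVec w) ≤ β * norm2 w)
    (Ωs : Type) (mΩ : MeasurableSpace Ωs) (μ : Measure Ωs) (hμ : IsProbabilityMeasure μ)
    (Δ : Fin m → Ωs → ℝ) (hmeas : ∀ k, Measurable (Δ k))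
    (hindep : ProbabilityTheory.iIndepFun Δ μ)
    (𝒟 : Measure ℝ) (h𝒟 : IsProbabilityMeasure 𝒟)
    (hdist : ∀ k, Measure.map (Δ k) μ = 𝒟)
    (θ : ℝ) (hθ : 0 ≤ θ) (hdev : DevModel N m 𝒟 θ)
    (w : Fin n → ℂ) :
    α ^ 2 * (1 - θ) * norm2 w ^ 2 ≤
      (∫ ω, norm2 ((((Real.sqrt N : ℂ) / (Real.sqrt m : ℂ)) •
        (dirS N m (samplePts m Δ ω) * Ψ)).mulVec w) ^ 2 ∂μ) ∧
    (∫ ω, norm2 ((((Real.sqrt N : ℂ) / (Real.sqrt m : ℂ)) •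
        (dirS N m (samplePts m Δ ω) * Ψ)).mulVec w) ^ 2 ∂μ) ≤
      β ^ 2 * (1 + θ) * norm2 w ^ 2 :=
  expectation_frame_bounds_general N n m hN hm Ψ α β hα hΨ Ωs mΩ μ Δ hmeas 𝒟 h𝒟 hdist θ hθ hdev w
end
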